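/- Let P be a topological property that is closed hereditary and preserved under finite closed sums, and let Q be a topological property that is closed hereditary and implies complete regularity. If X is a locally-P space that does not have P and has Q, then there exists a completely regular one-point extension Y = X ∪ {p} of X (with p ∉ X) such that for every open neighborhood V of p in Y, the set Y \ V has both P and Q. -/

import Mathlib

universe u

/-- A topological property: a predicate on topological spaces invariant under homeomorphism. -/
def TopInvariant (P : ∀ (X : Type u) [TopologicalSpace X], Prop) : Prop :=
  ∀ (X Y : Type u) [TopologicalSpace X] [TopologicalSpace Y], X ≃ₜ Y → P X → P Y

/-- `P` is closed hereditary: any closed subspace of a space with `P` also has `P`. -/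
def ClosedHereditary (P : ∀ (X : Type u) [TopologicalSpace X], Prop) : Prop :=
  ∀ (X : Type u) [TopologicalSpace X] (s : Set X), IsClosed s → P X → P s

/-- `P` is preserved under finite closed sums: any space which is a finite union of closed
subspaces each having `P` also has `P`. -/
def PreservedFiniteClosedSums (P : ∀ (X : Type u) [TopologicalSpace X], Prop) : Prop :=
  ∀ (X : Type u) [TopologicalSpace X] (n : ℕ) (F : Fin n → Set X),
    (∀ i, IsClosed (F i)) → (∀ i, P (F i)) → (⋃ i, F i) = Set.univ → P X

/-!
Adjoin to `X` a point `p` whose neighbourhoods are the sets containing some `{x | g x < ε}`,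
`ε > 0`, where `g : X → [0,1]` is continuous and every superlevel set `{g ≥ ε}` has `P`; since
`P` survives finite closed unions these sets form a filter base, and it is proper exactly because
`X` itself fails `P`, which makes `X` dense. The complement of a neighbourhood of `p` is a closed
subset of some `{g ≥ ε}`, hence has `P`, and has `Q` as a closed subspace of `X`. At `p`, a
truncation of `g / ε` separates `p` from a closed set. At `x ∈ X`, take a `P`-neighbourhood `N`
of `x` and a Urysohn function `f` for `x` and `K ∪ (X \ int N)`: the superlevel sets of `1 - f`
are closed in `N`, so `f` extends continuously by `1` at `p`.
-/

open Set Filter Topology unitInterval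

section PropertyLemmas

variable {P : ∀ (X : Type u) [TopologicalSpace X], Prop}

lemma TopInvariant.image (hP : TopInvariant P) {A B : Type u} [TopologicalSpace A]
    [TopologicalSpace B] {e : A → B} (he : IsEmbedding e) {s : Set A} (hs : P s) :
    P ↥(e '' s) :=
  hP _ _ (he.homeomorphImage s) hs

lemma TopInvariant.preimage_val_iff (hP : TopInvariant P) {X : Type u} [TopologicalSpace X]
    {s t : Set X} (hst : s ⊆ t) : P ↥((↑) ⁻¹' s : Set t) ↔ P s := by
  have e : ((↑) ⁻¹' s : Set t) ≃ₜ s :=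
    IsEmbedding.subtypeVal.homeomorphOfSubsetRange (by rwa [Subtype.range_coe])
  exact ⟨hP _ _ e, hP _ _ e.symm⟩

lemma PreservedFiniteClosedSums.of_isEmpty (hP : PreservedFiniteClosedSums P)
    (Z : Type u) [TopologicalSpace Z] [IsEmpty Z] : P Z :=
  hP Z 0 Fin.elim0 (fun i => i.elim0) (fun i => i.elim0) (by simp [univ_eq_empty_iff.2])

lemma ClosedHereditary.of_subset (hPinv : TopInvariant P) (hPch : ClosedHereditary P)
    {X : Type u} [TopologicalSpace X] {s t : Set X} (hst : s ⊆ t) (hs : IsClosed s)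
    (ht : P t) : P s :=
  (hPinv.preimage_val_iff hst).1 (hPch t _ (hs.preimage continuous_subtype_val) ht)

lemma PreservedFiniteClosedSums.union (hPinv : TopInvariant P)
    (hPsum : PreservedFiniteClosedSums P) {X : Type u} [TopologicalSpace X] {A B : Set X}
    (hA : IsClosed A) (hB : IsClosed B) (hPA : P A) (hPB : P B) : P ↥(A ∪ B) := by
  refine hPsum _ 2 ![(↑) ⁻¹' A, (↑) ⁻¹' B] ?_ ?_ ?_
  · intro i
    fin_cases i
    exacts [hA.preimage continuous_subtype_val, hB.preimage continuous_subtype_val]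
  · intro i
    fin_cases i
    exacts [(hPinv.preimage_val_iff subset_union_left).2 hPA,
      (hPinv.preimage_val_iff subset_union_right).2 hPB]
  · ext ⟨x, hx⟩
    simpa [Fin.exists_fin_two] using hx

end PropertyLemmas

def OnePointExt {X : Type u} (_L : Filter X) : Type u := Option X

namespace OnePointExt

variable {X : Type u} {L : Filter X}

def of : X → OnePointExt L := Option.some

def point : OnePointExt L := Option.none

@[elab_as_elim, induction_eliminator]
protected def rec {motive : OnePointExt L → Sort*} (point : motive point)
    (of : ∀ x, motive (of x)) : ∀ y, motive y :=
  Option.rec point of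

def elim {Z : Type*} (c : Z) (f : X → Z) : OnePointExt L → Z := fun y => Option.elim y c f

lemma of_injective : Function.Injective (of : X → OnePointExt L) := Option.some_injective X

@[simp] lemma of_ne_point (x : X) : (of x : OnePointExt L) ≠ point := Option.some_ne_none x

@[simp] lemma of_inj {x y : X} : (of x : OnePointExt L) = of y ↔ x = y := of_injective.eq_iff

lemma compl_range_of : (range (of : X → OnePointExt L))ᶜ = {point} := by
  ext y
  induction y <;> simp

lemma compl_eq_image_of {V : Set (OnePointExt L)} (hV : point ∈ V) :
    Vᶜ = of '' (of ⁻¹' V)ᶜ := by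
  ext y
  induction y <;> simp [hV]

variable [TopologicalSpace X]

instance : TopologicalSpace (OnePointExt L) :=
  .coinduced of ‹_› ⊔ nhdsAdjoint point (pure point ⊔ map of L)

lemma isOpen_iff {U : Set (OnePointExt L)} :
    IsOpen U ↔ IsOpen (of ⁻¹' U) ∧ (point ∈ U → of ⁻¹' U ∈ L) := by
  refine isOpen_sup.trans (and_congr Iff.rfl ?_)
  change (point ∈ U → U ∈ pure point ⊔ map of L) ↔ _
  simp +contextual [mem_sup, mem_map]

lemma isOpenEmbedding_of : IsOpenEmbedding (of : X → OnePointExt L) := by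
  refine .of_continuous_injective_isOpenMap ?_ of_injective fun s hs => ?_
  · exact continuous_def.2 fun U hU => (isOpen_iff.1 hU).1
  · refine isOpen_iff.2 ⟨by rwa [of_injective.preimage_image], fun h => ?_⟩
    simp at h

lemma dense_range_of [L.NeBot] : Dense (range (of : X → OnePointExt L)) := by
  refine dense_iff_inter_open.2 fun U hU ⟨y, hy⟩ => ?_
  induction y with
  | point =>
    obtain ⟨x, hx⟩ := L.nonempty_of_mem ((isOpen_iff.1 hU).2 hy)
    exact ⟨of x, hx, mem_range_self x⟩
  | of x => exact ⟨of x, hy, mem_range_self x⟩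

lemma continuous_elim {Z : Type*} [TopologicalSpace Z] {c : Z} {f : X → Z}
    (hf : Continuous f) (hfL : Tendsto f L (𝓝 c)) : Continuous (elim c f : OnePointExt L → Z) :=
  continuous_def.2 fun _ hU =>
    isOpen_iff.2 ⟨hU.preimage hf, fun hc => hfL (hU.mem_nhds hc)⟩

lemma completelyRegularSpace_of
    (hof : ∀ x (K : Set X), IsClosed K → x ∉ K →
      ∃ f : X → I, Continuous f ∧ f x = 0 ∧ EqOn f 1 K ∧ Tendsto f L (𝓝 1))
    (hpoint : ∀ S ∈ L, ∃ f : X → I, Continuous f ∧ EqOn f 1 Sᶜ ∧ Tendsto f L (𝓝 0)) :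
    CompletelyRegularSpace (OnePointExt L) := by
  refine ⟨fun y K hK hyK => ?_⟩
  have hKc := isOpen_iff.1 hK.isOpen_compl
  induction y with
  | point =>
    obtain ⟨f, hf, hfK, hfL⟩ := hpoint _ (hKc.2 hyK)
    refine ⟨elim 0 f, continuous_elim hf hfL, rfl, fun z hz => ?_⟩
    induction z with
    | point => exact absurd hz hyK
    | of z => exact hfK (not_not.2 hz)
  | of x =>
    obtain ⟨f, hf, hfx, hfK, hfL⟩ := hof x (of ⁻¹' K) (by simpa using hKc.1.isClosed_compl) hyK
    refine ⟨elim 1 f, continuous_elim hf hfL, hfx, fun z hz => ?_⟩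
    induction z with
    | point => rfl
    | of z => exact hfK hz

end OnePointExt

section SuperlevelFilter

variable {P : ∀ (X : Type u) [TopologicalSpace X], Prop} {X : Type u} [TopologicalSpace X]

def HasPSuperlevelSets (P : ∀ (X : Type u) [TopologicalSpace X], Prop) (g : X → I) : Prop :=
  Continuous g ∧ ∀ ε, 0 < ε → P ↥{x | ε ≤ g x}

lemma hasPSuperlevelSets_zero (hPsum : PreservedFiniteClosedSums P) :
    HasPSuperlevelSets P (0 : X → I) := by
  refine ⟨continuous_const, fun ε hε => ?_⟩
  have : IsEmpty ↥{x : X | ε ≤ (0 : X → I) x} := ⟨fun ⟨_, hx⟩ => hε.not_ge hx⟩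
  exact hPsum.of_isEmpty _

lemma HasPSuperlevelSets.sup (hPinv : TopInvariant P) (hPsum : PreservedFiniteClosedSums P)
    {g₁ g₂ : X → I} (h₁ : HasPSuperlevelSets P g₁) (h₂ : HasPSuperlevelSets P g₂) :
    HasPSuperlevelSets P (g₁ ⊔ g₂) := by
  refine ⟨h₁.1.sup h₂.1, fun ε hε => ?_⟩
  have hunion : {x | ε ≤ (g₁ ⊔ g₂) x} = {x | ε ≤ g₁ x} ∪ {x | ε ≤ g₂ x} := by
    ext x
    simp [le_sup_iff]
  rw [hunion]
  exact hPsum.union hPinv (isClosed_le continuous_const h₁.1)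
    (isClosed_le continuous_const h₂.1) (h₁.2 ε hε) (h₂.2 ε hε)

def superlevelFilter (P : ∀ (X : Type u) [TopologicalSpace X], Prop) (X : Type u)
    [TopologicalSpace X] : Filter X :=
  ⨅ g ∈ {g : X → I | HasPSuperlevelSets P g}, comap g (𝓝 0)

lemma hasBasis_superlevelFilter (hPinv : TopInvariant P) (hPsum : PreservedFiniteClosedSums P) :
    (superlevelFilter P X).HasBasis (fun p : (X → I) × I => HasPSuperlevelSets P p.1 ∧ 0 < p.2)
      fun p => {x | p.1 x < p.2} := by
  refine hasBasis_biInf_of_directed ⟨0, hasPSuperlevelSets_zero hPsum⟩ _ _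
    (fun g _ => (nhds_bot_basis (α := I)).comap g) fun g₁ h₁ g₂ h₂ => ?_
  refine ⟨g₁ ⊔ g₂, h₁.sup hPinv hPsum h₂, ?_, ?_⟩ <;> refine tendsto_iff_comap.1
    (tendsto_of_tendsto_of_tendsto_of_le_of_le tendsto_const_nhds tendsto_comap
      (fun x => nonneg') fun x => ?_)
  exacts [le_sup_left, le_sup_right]

lemma tendsto_superlevelFilter {g : X → I} (hg : HasPSuperlevelSets P g) :
    Tendsto g (superlevelFilter P X) (𝓝 0) :=
  tendsto_iff_comap.2 (iInf₂_le g hg)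

lemma neBot_superlevelFilter (hPinv : TopInvariant P) (hPsum : PreservedFiniteClosedSums P)
    (hX : ¬ P X) : (superlevelFilter P X).NeBot := by
  refine (hasBasis_superlevelFilter hPinv hPsum).neBot_iff.2 fun {p} ⟨hg, hε⟩ => ?_
  by_contra hempty
  have huniv : {x | p.2 ≤ p.1 x} = univ := by
    simpa [not_nonempty_iff_eq_empty, eq_empty_iff_forall_notMem, eq_univ_iff_forall] using hempty
  exact hX (hPinv _ _ (Homeomorph.Set.univ X) (huniv ▸ hg.2 p.2 hε))

lemma prop_of_compl_mem_superlevelFilter (hPinv : TopInvariant P) (hPch : ClosedHereditary P)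
    (hPsum : PreservedFiniteClosedSums P) {A : Set X} (hA : IsClosed A)
    (hAc : Aᶜ ∈ superlevelFilter P X) : P A := by
  obtain ⟨⟨g, ε⟩, ⟨hg, hε⟩, hgA⟩ := (hasBasis_superlevelFilter hPinv hPsum).mem_iff.1 hAc
  refine hPch.of_subset hPinv (fun x hx => ?_) hA (hg.2 ε hε)
  simpa using mt (@hgA x) (not_not.2 hx)

lemma exists_eqOn_compl_tendsto_zero (hPinv : TopInvariant P)
    (hPsum : PreservedFiniteClosedSums P) {S : Set X} (hS : S ∈ superlevelFilter P X) :
    ∃ f : X → I, Continuous f ∧ EqOn f 1 Sᶜ ∧ Tendsto f (superlevelFilter P X) (𝓝 0) := by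
  obtain ⟨⟨g, ε⟩, ⟨hg, hε⟩, hgS⟩ := (hasBasis_superlevelFilter hPinv hPsum).mem_iff.1 hS
  set F : I → I := fun t => projIcc 0 1 zero_le_one (t / ε)
  have hF : Continuous F := continuous_projIcc.comp (continuous_subtype_val.div_const _)
  refine ⟨F ∘ g, hF.comp hg.1, fun x hx => ?_, ?_⟩
  · have hεx : (ε : ℝ) ≤ g x := by simpa using mt (@hgS x) hx
    have hε' : (0 : ℝ) < ε := unitInterval.pos_iff_ne_zero.2 hε.ne'
    exact projIcc_of_right_le zero_le_one ((one_le_div hε').2 hεx)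
  · simpa [F] using (hF.tendsto 0).comp (tendsto_superlevelFilter hg)

lemma exists_tendsto_one_superlevelFilter (hPinv : TopInvariant P) (hPch : ClosedHereditary P)
    [CompletelyRegularSpace X] (hloc : ∀ x : X, ∃ N ∈ 𝓝 x, P ↥N) {x : X} {K : Set X}
    (hK : IsClosed K) (hx : x ∉ K) :
    ∃ f : X → I, Continuous f ∧ f x = 0 ∧ EqOn f 1 K ∧
      Tendsto f (superlevelFilter P X) (𝓝 1) := by
  obtain ⟨N, hN, hPN⟩ := hloc x
  obtain ⟨f, hf, hfx, hfK⟩ := CompletelyRegularSpace.completely_regular x (K ∪ (interior N)ᶜ)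
    (hK.union isOpen_interior.isClosed_compl) (by simp [hx, mem_interior_iff_mem_nhds.2 hN])
  have hσf : HasPSuperlevelSets P (σ ∘ f) := by
    refine ⟨continuous_symm.comp hf, fun ε hε => hPch.of_subset hPinv (fun y hy => ?_)
      (isClosed_le continuous_const (continuous_symm.comp hf)) hPN⟩
    by_contra hyN
    have hfy : f y = 1 := hfK (Or.inr fun h => hyN (interior_subset h))
    exact hε.not_ge (by simpa [hfy] using hy)
  refine ⟨f, hf, hfx, fun y hy => hfK (Or.inl hy), ?_⟩
  simpa [Function.comp_def] using (continuous_symm.tendsto 0).comp (tendsto_superlevelFilter hσf)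

end SuperlevelFilter

theorem one_point_extension_neighborhood_complements
    (P Q : ∀ (X : Type u) [TopologicalSpace X], Prop)
    (hPinv : TopInvariant P) (hQinv : TopInvariant Q)
    (hPch : ClosedHereditary P) (hPsum : PreservedFiniteClosedSums P)
    (hQch : ClosedHereditary Q)
    (hQcr : ∀ (Z : Type u) [TopologicalSpace Z], Q Z → CompletelyRegularSpace Z)
    (X : Type u) [TopologicalSpace X]
    (hloc : ∀ x : X, ∃ N ∈ nhds x, P ↥N)
    (hnP : ¬ P X) (hQ : Q X) :
    ∃ (Y : Type u) (_ : TopologicalSpace Y) (e : X → Y) (p : Y),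
      Topology.IsEmbedding e ∧ Dense (Set.range e) ∧ (Set.range e)ᶜ = {p} ∧
      CompletelyRegularSpace Y ∧
      ∀ V : Set Y, IsOpen V → p ∈ V → P ↥(Vᶜ : Set Y) ∧ Q ↥(Vᶜ : Set Y) := by
  have := hQcr X hQ
  have := neBot_superlevelFilter hPinv hPsum hnP
  have he := (OnePointExt.isOpenEmbedding_of (L := superlevelFilter P X)).isEmbedding
  refine ⟨OnePointExt (superlevelFilter P X), inferInstance, OnePointExt.of, OnePointExt.point,
    he, OnePointExt.dense_range_of, OnePointExt.compl_range_of,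
    OnePointExt.completelyRegularSpace_of
      (fun _ _ => exists_tendsto_one_superlevelFilter hPinv hPch hloc)
      (fun _ => exists_eqOn_compl_tendsto_zero hPinv hPsum), fun V hV hpV => ?_⟩
  obtain ⟨hVX, hVL⟩ := OnePointExt.isOpen_iff.1 hV
  have hA := hVX.isClosed_compl
  have hPA := prop_of_compl_mem_superlevelFilter hPinv hPch hPsum hA (by simpa using hVL hpV)
  rw [OnePointExt.compl_eq_image_of hpV]
  exact ⟨hPinv.image he hPA, hQinv.image he (hQch X _ hA hQ)⟩
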